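/- arXiv:2605.10466 — 3 statements merged into one kernel-verified Lean document; each statement's English description precedes it below -/
import Mathlib

section
/- Let u be a nonzero vector in a Euclidean space and e a vector with ‖e‖ ≤ η‖u‖ for some η ∈ [0,1). Then u + e ≠ 0 and cos(u+e, u) := ⟨u+e, u⟩/(‖u+e‖·‖u‖) ≥ √(1−η²). -/
open scoped RealInnerProductSpace

/-
The defect `‖u‖²‖v‖² - ⟪u, v⟫²` of the Cauchy–Schwarz inequality is `‖v‖²` times the squared
distance from `u` to the line `ℝ v`, hence at most `‖v‖²‖u - v‖²`. With `v = u + e` this bounds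
`sin²` of the angle by `η²`. Since `‖e‖ < ‖u‖`, the inner product `⟪u + e, u⟫` is positive, so
`cos` is the positive square root of `1 - sin² ≥ 1 - η²`.
-/

section

variable {E : Type*} [NormedAddCommGroup E] [InnerProductSpace ℝ E]

theorem norm_sq_mul_norm_sq_sub_inner_sq_le (u v : E) :
    ‖u‖ ^ 2 * ‖v‖ ^ 2 - ⟪u, v⟫ ^ 2 ≤ ‖v‖ ^ 2 * ‖u - v‖ ^ 2 := by
  have hsub : ‖u - v‖ ^ 2 = ‖u‖ ^ 2 - 2 * ⟪u, v⟫ + ‖v‖ ^ 2 := norm_sub_sq_real u v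
  -- the difference of the two sides is `(‖v‖² - ⟪u, v⟫)²`
  nlinarith [sq_nonneg (‖v‖ ^ 2 - ⟪u, v⟫)]

theorem real_inner_add_self_pos_of_norm_lt {u e : E} (he : ‖e‖ < ‖u‖) :
    0 < ⟪u + e, u⟫ := by
  have hcs : -(‖e‖ * ‖u‖) ≤ ⟪e, u⟫ := neg_le_of_abs_le (abs_real_inner_le_norm e u)
  rw [inner_add_left, real_inner_self_eq_norm_sq]
  nlinarith [norm_nonneg e]

theorem sqrt_one_sub_sq_mul_norm_mul_norm_le_inner {u v : E} {η : ℝ}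
    (hv : ‖v - u‖ ≤ η * ‖u‖) (hpos : 0 ≤ ⟪v, u⟫) :
    Real.sqrt (1 - η ^ 2) * (‖v‖ * ‖u‖) ≤ ⟪v, u⟫ := by
  have hdist : ‖v - u‖ ^ 2 ≤ η ^ 2 * ‖u‖ ^ 2 := by
    rw [← mul_pow]
    exact pow_le_pow_left₀ (norm_nonneg _) hv 2
  have hsq : (1 - η ^ 2) * (‖v‖ * ‖u‖) ^ 2 ≤ ⟪v, u⟫ ^ 2 := by
    have := norm_sq_mul_norm_sq_sub_inner_sq_le u v
    rw [real_inner_comm, norm_sub_rev] at this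
    nlinarith [mul_le_mul_of_nonneg_left hdist (sq_nonneg ‖v‖)]
  calc Real.sqrt (1 - η ^ 2) * (‖v‖ * ‖u‖)
      = Real.sqrt ((1 - η ^ 2) * (‖v‖ * ‖u‖) ^ 2) := by
        rw [Real.sqrt_mul' _ (sq_nonneg _), Real.sqrt_sq (by positivity)]
    _ ≤ Real.sqrt (⟪v, u⟫ ^ 2) := Real.sqrt_le_sqrt hsq
    _ = ⟪v, u⟫ := Real.sqrt_sq hpos

end

theorem stmt_0_general {E : Type*} [NormedAddCommGroup E] [InnerProductSpace ℝ E]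
    (u e : E) (η : ℝ) (hu : u ≠ 0) (hη1 : η < 1)
    (he : ‖e‖ ≤ η * ‖u‖) :
    u + e ≠ 0 ∧ Real.sqrt (1 - η ^ 2) ≤ ⟪u + e, u⟫ / (‖u + e‖ * ‖u‖) := by
  have hu_pos : 0 < ‖u‖ := norm_pos_iff.mpr hu
  have hpos : 0 < ⟪u + e, u⟫ :=
    real_inner_add_self_pos_of_norm_lt (he.trans_lt (by nlinarith))
  have hne : u + e ≠ 0 := by
    intro h
    simp [h] at hpos
  refine ⟨hne, ?_⟩
  rw [le_div_iff₀ (mul_pos (norm_pos_iff.mpr hne) hu_pos)]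
  exact sqrt_one_sub_sq_mul_norm_mul_norm_le_inner (by rwa [add_sub_cancel_left]) hpos.le

/-- Geometric stability: if `‖e‖ ≤ η‖u‖` with `η ∈ [0,1)` and `u ≠ 0`, then `u + e ≠ 0`
and the cosine of the angle between `u + e` and `u` is at least `√(1 - η²)`. -/
theorem stmt_0 {E : Type*} [NormedAddCommGroup E] [InnerProductSpace ℝ E]
    (u e : E) (η : ℝ) (hu : u ≠ 0) (hη0 : 0 ≤ η) (hη1 : η < 1)
    (he : ‖e‖ ≤ η * ‖u‖) :
    u + e ≠ 0 ∧ Real.sqrt (1 - η ^ 2) ≤ ⟪u + e, u⟫ / (‖u + e‖ * ‖u‖) :=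
  stmt_0_general u e η hu hη1 he
end

section
/- Let X be an integrable random vector in ℝ^d such that E[exp(pᵀX)] < ∞ for all p in a neighborhood of p₀. Then the cumulant generating function Λ(u) = log E[exp(uᵀX)] is differentiable at p₀ with ∇Λ(p₀) = E[X exp(p₀ᵀX)] / E[exp(p₀ᵀX)]. -/
/-!
Differentiating under the integral sign, the derivative of `u ↦ E[exp⟪u, X⟫]` at `p₀` is
`v ↦ E[exp⟪p₀, X⟫ ⟪v, X⟫]`, and the chain rule for `log` gives the formula. Domination of the
derivative near `p₀` reduces to `exp (r‖x‖) ≤ ∑_σ exp⟪q_σ, x⟫`, where, for an orthonormal basis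
`(b i)`, the `q_σ = ∑ i, ±r b i` run over all sign choices: these are finitely many small vectors,
so `exp⟪p₀ + q_σ, X⟫` is integrable by hypothesis.
-/

open MeasureTheory Filter Topology Metric InnerProductSpace
open scoped RealInnerProductSpace

section SignCombination

variable {ι E : Type*} [Fintype ι] [NormedAddCommGroup E] [InnerProductSpace ℝ E]

theorem OrthonormalBasis.norm_le_sum_abs_inner (b : OrthonormalBasis ι ℝ E) (x : E) :
    ‖x‖ ≤ ∑ i, |⟪b i, x⟫| :=
  calc ‖x‖ = ‖∑ i, ⟪b i, x⟫ • b i‖ := by rw [b.sum_repr']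
    _ ≤ ∑ i, ‖⟪b i, x⟫ • b i‖ := norm_sum_le _ _
    _ = ∑ i, |⟪b i, x⟫| := by simp [norm_smul, b.orthonormal.1]

theorem Real.exp_mul_sum_abs_le [DecidableEq ι] (r : ℝ) (a : ι → ℝ) :
    Real.exp (r * ∑ i, |a i|) ≤
      ∑ σ : ι → Bool, Real.exp (∑ i, (if σ i then r else -r) * a i) :=
  calc Real.exp (r * ∑ i, |a i|) = ∏ i, Real.exp (r * |a i|) := by
        rw [Finset.mul_sum, Real.exp_sum]
    _ ≤ ∏ i, ∑ s : Bool, Real.exp ((if s then r else -r) * a i) := by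
        gcongr with i
        simp only [Fintype.sum_bool, if_true, Bool.false_eq_true, if_false, neg_mul]
        rcases abs_choice (a i) with h | h <;> rw [h]
        · exact le_add_of_nonneg_right (Real.exp_pos _).le
        · rw [mul_neg]; exact le_add_of_nonneg_left (Real.exp_pos _).le
    _ = ∑ σ : ι → Bool, ∏ i, Real.exp ((if σ i then r else -r) * a i) := Fintype.prod_sum _
    _ = ∑ σ : ι → Bool, Real.exp (∑ i, (if σ i then r else -r) * a i) := by
        simp only [Real.exp_sum]

namespace OrthonormalBasis

variable (b : OrthonormalBasis ι ℝ E)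

noncomputable def signCombination (r : ℝ) (σ : ι → Bool) : E :=
  ∑ i, (if σ i then r else -r) • b i

theorem inner_signCombination (r : ℝ) (σ : ι → Bool) (x : E) :
    ⟪b.signCombination r σ, x⟫ = ∑ i, (if σ i then r else -r) * ⟪b i, x⟫ := by
  simp only [signCombination, sum_inner, real_inner_smul_left]

theorem norm_signCombination_le (r : ℝ) (σ : ι → Bool) :
    ‖b.signCombination r σ‖ ≤ Fintype.card ι * |r| :=
  calc ‖b.signCombination r σ‖ ≤ ∑ i, ‖(if σ i then r else -r) • b i‖ := norm_sum_le _ _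
    _ = ∑ _i : ι, |r| := by
        refine Finset.sum_congr rfl fun i _ => ?_
        rw [norm_smul, b.orthonormal.1, mul_one, Real.norm_eq_abs]
        split_ifs <;> simp
    _ = Fintype.card ι * |r| := by simp

theorem exp_mul_norm_le_sum_exp_inner_signCombination [DecidableEq ι] {r : ℝ} (hr : 0 ≤ r)
    (x : E) :
    Real.exp (r * ‖x‖) ≤ ∑ σ : ι → Bool, Real.exp ⟪b.signCombination r σ, x⟫ := by
  simp only [inner_signCombination]
  calc Real.exp (r * ‖x‖) ≤ Real.exp (r * ∑ i, |⟪b i, x⟫|) := by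
        gcongr; exact b.norm_le_sum_abs_inner x
    _ ≤ _ := Real.exp_mul_sum_abs_le r _

end OrthonormalBasis

end SignCombination

theorem Real.exp_inner_mul_norm_le {E : Type*} [NormedAddCommGroup E] [InnerProductSpace ℝ E]
    {δ : ℝ} (hδ : 0 < δ) {u p₀ : E} (hu : ‖u - p₀‖ ≤ δ) (x : E) :
    Real.exp ⟪u, x⟫ * ‖x‖ ≤ δ⁻¹ * Real.exp (⟪p₀, x⟫ + 2 * δ * ‖x‖) := by
  have h_inner : ⟪u, x⟫ ≤ ⟪p₀, x⟫ + δ * ‖x‖ := by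
    have := (real_inner_le_norm (u - p₀) x).trans (mul_le_mul_of_nonneg_right hu (norm_nonneg x))
    rw [inner_sub_left] at this
    linarith
  have h_norm : ‖x‖ ≤ δ⁻¹ * Real.exp (δ * ‖x‖) := by
    rw [le_inv_mul_iff₀ hδ]
    linarith [Real.add_one_le_exp (δ * ‖x‖)]
  calc Real.exp ⟪u, x⟫ * ‖x‖
      ≤ Real.exp (⟪p₀, x⟫ + δ * ‖x‖) * (δ⁻¹ * Real.exp (δ * ‖x‖)) := by gcongr
    _ = δ⁻¹ * Real.exp (⟪p₀, x⟫ + 2 * δ * ‖x‖) := by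
        rw [mul_left_comm, ← Real.exp_add]; ring_nf

section ExpMoments

variable {E Ω : Type*} [NormedAddCommGroup E] [InnerProductSpace ℝ E]
  [MeasurableSpace Ω] {μ : Measure Ω} {X : Ω → E} {p₀ : E}

theorem exists_integrable_bound_exp_inner_mul_norm [FiniteDimensional ℝ E]
    (hmom : ∀ᶠ p in 𝓝 p₀, Integrable (fun ω => Real.exp ⟪p, X ω⟫) μ) :
    ∃ δ > 0, ∃ g : Ω → ℝ, Integrable g μ ∧
      ∀ ω, ∀ u ∈ ball p₀ δ, Real.exp ⟪u, X ω⟫ * ‖X ω‖ ≤ g ω := by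
  obtain ⟨ε, hε, hint⟩ := Metric.eventually_nhds_iff.1 hmom
  set b := stdOrthonormalBasis ℝ E
  set n : ℝ := (Module.finrank ℝ E : ℝ)
  set δ := ε / (2 * (n + 1))
  have hδ : 0 < δ := by positivity
  have hq : ∀ σ, dist (p₀ + b.signCombination (2 * δ) σ) p₀ < ε := fun σ =>
    calc dist (p₀ + b.signCombination (2 * δ) σ) p₀ ≤ n * |2 * δ| := by
          simpa using b.norm_signCombination_le (2 * δ) σ
      _ < ε := by
          have hn : 0 ≤ n := Nat.cast_nonneg _
          rw [abs_of_pos (by positivity),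
            show n * (2 * δ) = ε * (n / (n + 1)) by simp only [δ]; field_simp]
          exact mul_lt_of_lt_one_right hε ((div_lt_one (by positivity)).2 (lt_add_one n))
  refine ⟨δ, hδ, fun ω => δ⁻¹ * ∑ σ, Real.exp ⟪p₀ + b.signCombination (2 * δ) σ, X ω⟫,
    (integrable_finsetSum _ fun σ _ => hint (hq σ)).const_mul _, fun ω u hu => ?_⟩
  calc Real.exp ⟪u, X ω⟫ * ‖X ω‖
      ≤ δ⁻¹ * (Real.exp ⟪p₀, X ω⟫ * Real.exp (2 * δ * ‖X ω‖)) := by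
        rw [← Real.exp_add]
        exact Real.exp_inner_mul_norm_le hδ (mem_ball_iff_norm.1 hu).le (X ω)
    _ ≤ δ⁻¹ * (Real.exp ⟪p₀, X ω⟫ *
          ∑ σ, Real.exp ⟪b.signCombination (2 * δ) σ, X ω⟫) := by
        gcongr
        exact b.exp_mul_norm_le_sum_exp_inner_signCombination (by positivity) (X ω)
    _ = δ⁻¹ * ∑ σ, Real.exp ⟪p₀ + b.signCombination (2 * δ) σ, X ω⟫ := by
        simp only [Finset.mul_sum, ← Real.exp_add, inner_add_left]

theorem hasGradientAt_integral_exp_inner [FiniteDimensional ℝ E]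
    (hX : AEStronglyMeasurable X μ)
    (hmom : ∀ᶠ p in 𝓝 p₀, Integrable (fun ω => Real.exp ⟪p, X ω⟫) μ) :
    HasGradientAt (fun u => ∫ ω, Real.exp ⟪u, X ω⟫ ∂μ) (∫ ω, Real.exp ⟪p₀, X ω⟫ • X ω ∂μ) p₀ := by
  obtain ⟨δ, hδ, g, hg, hbound⟩ := exists_integrable_bound_exp_inner_mul_norm hmom
  have hmeas : ∀ p : E, AEStronglyMeasurable (fun ω => Real.exp ⟪p, X ω⟫) μ := fun p =>
    Real.continuous_exp.comp_aestronglyMeasurable (aestronglyMeasurable_const.inner hX)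
  have hderiv_int : Integrable (fun ω => Real.exp ⟪p₀, X ω⟫ • X ω) μ := by
    refine hg.mono' ((hmeas p₀).smul hX) (.of_forall fun ω => ?_)
    simpa [norm_smul] using hbound ω p₀ (mem_ball_self hδ)
  have hfderiv : HasFDerivAt (fun u => ∫ ω, Real.exp ⟪u, X ω⟫ ∂μ)
      (∫ ω, Real.exp ⟪p₀, X ω⟫ • innerSL ℝ (X ω) ∂μ) p₀ := by
    refine hasFDerivAt_integral_of_dominated_of_fderiv_le
      (F' := fun u ω => Real.exp ⟪u, X ω⟫ • innerSL ℝ (X ω)) (ball_mem_nhds p₀ hδ)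
      (.of_forall hmeas) hmom.self_of_nhds
      ((hmeas p₀).smul ((innerSL ℝ).continuous.comp_aestronglyMeasurable hX))
      (.of_forall fun ω u hu => ?_) hg (.of_forall fun ω u _ => ?_)
    · simpa [norm_smul] using hbound ω u hu
    · simp_rw [real_inner_comm (X ω)]
      exact ((innerSL ℝ (X ω)).hasFDerivAt).exp
  have hdual : toDual ℝ E (∫ ω, Real.exp ⟪p₀, X ω⟫ • X ω ∂μ) =
      ∫ ω, Real.exp ⟪p₀, X ω⟫ • innerSL ℝ (X ω) ∂μ := by
    change innerSL ℝ _ = _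
    simp_rw [← (innerSL ℝ).integral_comp_comm hderiv_int, map_smul]
  rw [hasGradientAt_iff_hasFDerivAt, hdual]
  exact hfderiv

end ExpMoments

theorem HasGradientAt.log {E : Type*} [NormedAddCommGroup E] [InnerProductSpace ℝ E]
    [CompleteSpace E] {f : E → ℝ} {f' x : E} (hf : HasGradientAt f f' x) (hx : f x ≠ 0) :
    HasGradientAt (fun y => Real.log (f y)) ((f x)⁻¹ • f') x := by
  rw [hasGradientAt_iff_hasFDerivAt, map_smul]
  exact (hasGradientAt_iff_hasFDerivAt.1 hf).log hx

/-- Differentiability of the cumulant generating function: if `E[exp⟪p, X⟫]` is finite for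
all `p` in a neighborhood of `p₀` and `X` is integrable, then
`Λ(u) = log E[exp⟪u, X⟫]` has gradient `E[X exp⟪p₀,X⟫] / E[exp⟪p₀,X⟫]` at `p₀`. -/
theorem stmt_2 {d : ℕ} {Ω : Type*} [MeasurableSpace Ω]
    (μ : Measure Ω) [IsProbabilityMeasure μ]
    (X : Ω → EuclideanSpace ℝ (Fin d)) (hX : Integrable X μ)
    (p₀ : EuclideanSpace ℝ (Fin d))
    (hmom : ∃ ε > 0, ∀ p : EuclideanSpace ℝ (Fin d), ‖p - p₀‖ < ε →
      Integrable (fun ω => Real.exp ⟪p, X ω⟫) μ) :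
    HasGradientAt (fun u : EuclideanSpace ℝ (Fin d) =>
        Real.log (∫ ω, Real.exp ⟪u, X ω⟫ ∂μ))
      ((∫ ω, Real.exp ⟪p₀, X ω⟫ ∂μ)⁻¹ • ∫ ω, Real.exp ⟪p₀, X ω⟫ • X ω ∂μ) p₀ := by
  obtain ⟨ε, hε, hint⟩ := hmom
  have hmom' : ∀ᶠ p in 𝓝 p₀, Integrable (fun ω => Real.exp ⟪p, X ω⟫) μ :=
    Metric.eventually_nhds_iff.2 ⟨ε, hε, fun p hp => hint p (by rwa [← dist_eq_norm])⟩
  exact (hasGradientAt_integral_exp_inner hX.aestronglyMeasurable hmom').log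
    (integral_exp_pos hmom'.self_of_nhds).ne'
end

section
/- Let X be a rotationally invariant random vector on ℝ^d with X ≠ 0 almost surely and moment conditions E[exp(pᵀX)] < ∞, E[‖X‖ exp(pᵀX)] < ∞. Then for every p ≠ 0, the tilted mean T(p) = E[X exp(pᵀX)]/E[exp(pᵀX)] satisfies T(p) = γ·p for some γ > 0. -/
/-!
By rotational invariance the law of `X` is preserved by every linear isometry `R` fixing `p`,
and such an `R` commutes with the tilt `x ↦ exp ⟪p, x⟫ • x`; so `R` fixes the tilted moment
`M = E[exp ⟪p, X⟫ • X]`. Taking `R` the reflection in the line `ℝ ∙ p` forces `M = c • p`.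
The sign of `c` is that of `⟪p, M⟫ = E[Y exp Y]` with `Y = ⟪p, X⟫`. Since `-X` has the law of
`X`, `Y` is symmetric and `E[Y exp Y] = E[Y sinh Y] > 0` as soon as `Y ≠ 0` with positive
probability; and if `Y = 0` a.s., then `⟪q, X⟫ = 0` a.s. for every `q` of the norm of `p`
(rotate `q` to `p`), hence `X = 0` a.s.
-/

open MeasureTheory ProbabilityTheory Real
open scoped RealInnerProductSpace

lemma Real.mul_sinh_nonneg (x : ℝ) : 0 ≤ x * sinh x := by
  rcases le_total 0 x with hx | hx
  · exact mul_nonneg hx (sinh_nonneg_iff.mpr hx)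
  · exact mul_nonneg_of_nonpos_of_nonpos hx (sinh_nonpos_iff.mpr hx)

lemma Real.mul_sinh_pos {x : ℝ} (hx : x ≠ 0) : 0 < x * sinh x := by
  rcases hx.lt_or_gt with hx | hx
  · exact mul_pos_of_neg_of_neg hx (sinh_neg_iff.mpr hx)
  · exact mul_pos hx (sinh_pos_iff.mpr hx)

section Symmetric

variable {Ω : Type*} [MeasurableSpace Ω] {μ : Measure Ω} {Y : Ω → ℝ}

lemma integral_mul_exp_pos_of_identDistrib_neg (hsymm : IdentDistrib (fun ω => -Y ω) Y μ μ)
    (hint : Integrable (fun ω => Y ω * exp (Y ω)) μ) (hY : μ {ω | Y ω ≠ 0} ≠ 0) :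
    0 < ∫ ω, Y ω * exp (Y ω) ∂μ := by
  have hk : IdentDistrib (fun ω => -Y ω * exp (-Y ω)) (fun ω => Y ω * exp (Y ω)) μ μ :=
    hsymm.comp (measurable_id.mul measurable_exp)
  have hint_neg : Integrable (fun ω => -Y ω * exp (-Y ω)) μ := hk.integrable_iff.mpr hint
  have hsinh : Integrable (fun ω => Y ω * sinh (Y ω)) μ := by
    refine ((hint.add hint_neg).div_const 2).congr (ae_of_all _ fun ω => ?_)
    simp only [Pi.add_apply, sinh_eq]; ring
  have hpos : 0 < ∫ ω, Y ω * sinh (Y ω) ∂μ := by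
    rw [integral_pos_iff_support_of_nonneg (fun ω => mul_sinh_nonneg _) hsinh]
    convert pos_iff_ne_zero.mpr hY using 2
    ext ω
    simp [sinh_eq_zero]
  calc 0 < ∫ ω, Y ω * sinh (Y ω) ∂μ := hpos
    _ = ((∫ ω, -Y ω * exp (-Y ω) ∂μ) + ∫ ω, Y ω * exp (Y ω) ∂μ) / 2 := by
      rw [← integral_add hint_neg hint, ← integral_div]
      congr 1; ext ω; rw [sinh_eq]; ring
    _ = ∫ ω, Y ω * exp (Y ω) ∂μ := by rw [hk.integral_eq]; ring

end Symmetric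

section Isometry

variable {E : Type*} [NormedAddCommGroup E] [InnerProductSpace ℝ E]

lemma exists_linearIsometryEquiv_apply_eq {x y : E} (h : ‖x‖ = ‖y‖) :
    ∃ R : E ≃ₗᵢ[ℝ] E, R x = y :=
  ⟨_, Submodule.reflection_sub h⟩

lemma mem_span_singleton_of_forall_linearIsometryEquiv {p v : E}
    (h : ∀ R : E ≃ₗᵢ[ℝ] E, R p = p → R v = v) : v ∈ ℝ ∙ p :=
  (Submodule.reflection_eq_self_iff v).mp <|
    h _ (Submodule.reflection_mem_subspace_eq_self (Submodule.mem_span_singleton_self p))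

end Isometry

section RotationInvariant

variable {E : Type*} [NormedAddCommGroup E] [InnerProductSpace ℝ E]
  [MeasurableSpace E] [BorelSpace E] {Ω : Type*} [MeasurableSpace Ω]

def IsRotationInvariant (X : Ω → E) (μ : Measure Ω) : Prop :=
  ∀ R : E ≃ₗᵢ[ℝ] E, μ.map (fun ω => R (X ω)) = μ.map X

variable {μ : Measure Ω} {X : Ω → E}

lemma IsRotationInvariant.identDistrib (hrot : IsRotationInvariant X μ) (hX : AEMeasurable X μ)
    (R : E ≃ₗᵢ[ℝ] E) : IdentDistrib (fun ω => R (X ω)) X μ μ where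
  aemeasurable_fst := R.continuous.measurable.comp_aemeasurable hX
  aemeasurable_snd := hX
  map_eq := hrot R

lemma IsRotationInvariant.ae_inner_eq_zero_of_norm_eq (hrot : IsRotationInvariant X μ)
    (hX : AEMeasurable X μ) {p q : E} (hpq : ‖q‖ = ‖p‖) (hp : ∀ᵐ ω ∂μ, ⟪p, X ω⟫ = 0) :
    ∀ᵐ ω ∂μ, ⟪q, X ω⟫ = 0 := by
  obtain ⟨R, hR⟩ := exists_linearIsometryEquiv_apply_eq hpq
  have hmeas : MeasurableSet {x : E | ⟪p, x⟫ = 0} :=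
    measurableSet_eq_fun (continuous_const.inner continuous_id).measurable measurable_const
  filter_upwards [(hrot.identDistrib hX R).symm.ae_snd hmeas hp] with ω hω
  rwa [← hR, R.inner_map_map] at hω

lemma IsRotationInvariant.ae_eq_zero_of_ae_inner_eq_zero [FiniteDimensional ℝ E]
    (hrot : IsRotationInvariant X μ) (hX : AEMeasurable X μ) {p : E} (hp : p ≠ 0)
    (hpX : ∀ᵐ ω ∂μ, ⟪p, X ω⟫ = 0) : ∀ᵐ ω ∂μ, X ω = 0 := by
  let b := stdOrthonormalBasis ℝ E
  have hb : ∀ i, ∀ᵐ ω ∂μ, ⟪b i, X ω⟫ = 0 := fun i => by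
    have hnorm : ‖‖p‖ • b i‖ = ‖p‖ := by simp [norm_smul, b.orthonormal.1 i]
    filter_upwards [hrot.ae_inner_eq_zero_of_norm_eq hX hnorm hpX] with ω hω
    rw [real_inner_smul_left] at hω
    exact (mul_eq_zero.mp hω).resolve_left (norm_ne_zero_iff.mpr hp)
  filter_upwards [ae_all_iff.mpr hb] with ω hω
  exact InnerProductSpace.ext_inner_left_basis b.toBasis fun i => by simpa using hω i

lemma IsRotationInvariant.measure_inner_ne_zero_ne_zero [FiniteDimensional ℝ E] [NeZero μ]
    (hrot : IsRotationInvariant X μ) (hX : AEMeasurable X μ) (hne : ∀ᵐ ω ∂μ, X ω ≠ 0)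
    {p : E} (hp : p ≠ 0) : μ {ω | ⟪p, X ω⟫ ≠ 0} ≠ 0 := fun h => by
  have hzero := hrot.ae_eq_zero_of_ae_inner_eq_zero hX hp (ae_iff.mpr (by simpa using h))
  obtain ⟨ω, hω, hω'⟩ := (hne.and hzero).exists
  exact hω hω'

lemma IsRotationInvariant.integral_exp_inner_smul_mem_span [CompleteSpace E]
    (hrot : IsRotationInvariant X μ) (hX : AEMeasurable X μ) (p : E) :
    ∫ ω, exp ⟪p, X ω⟫ • X ω ∂μ ∈ ℝ ∙ p := by
  refine mem_span_singleton_of_forall_linearIsometryEquiv fun R hR => ?_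
  have hcont : Continuous fun x : E => exp ⟪p, x⟫ • x :=
    (continuous_exp.comp (continuous_const.inner continuous_id)).smul continuous_id
  calc R (∫ ω, exp ⟪p, X ω⟫ • X ω ∂μ) = ∫ ω, R (exp ⟪p, X ω⟫ • X ω) ∂μ :=
        (R.toLinearIsometry.integral_comp_comm _).symm
    _ = ∫ ω, exp ⟪p, R (X ω)⟫ • R (X ω) ∂μ := by
        congr 1; ext ω
        rw [R.map_smul, ← hR, R.inner_map_map, hR]
    _ = ∫ ω, exp ⟪p, X ω⟫ • X ω ∂μ :=
        ((hrot.identDistrib hX R).comp hcont.measurable).integral_eq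

lemma IsRotationInvariant.inner_integral_exp_inner_smul_pos [CompleteSpace E]
    [FiniteDimensional ℝ E] [NeZero μ]
    (hrot : IsRotationInvariant X μ) (hX : AEMeasurable X μ) (hne : ∀ᵐ ω ∂μ, X ω ≠ 0)
    {p : E} (hp : p ≠ 0) (hint : Integrable (fun ω => exp ⟪p, X ω⟫ • X ω) μ) :
    0 < ⟪p, ∫ ω, exp ⟪p, X ω⟫ • X ω ∂μ⟫ := by
  have hsymm : IdentDistrib (fun ω => -⟪p, X ω⟫) (fun ω => ⟪p, X ω⟫) μ μ := by
    simpa only [Function.comp_def, LinearIsometryEquiv.coe_neg, inner_neg_right] using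
      (hrot.identDistrib hX (LinearIsometryEquiv.neg ℝ)).comp
        (continuous_const.inner continuous_id : Continuous fun x : E => ⟪p, x⟫).measurable
  have hinner : ∀ ω, ⟪p, exp ⟪p, X ω⟫ • X ω⟫ = ⟪p, X ω⟫ * exp ⟪p, X ω⟫ := fun ω => by
    rw [real_inner_smul_right, mul_comm]
  rw [← integral_inner hint, funext hinner]
  exact integral_mul_exp_pos_of_identDistrib_neg hsymm
    (by simpa only [hinner] using hint.const_inner (𝕜 := ℝ) p)
    (hrot.measure_inner_ne_zero_ne_zero hX hne hp)

end RotationInvariant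

/-- Rotational-invariance alignment: for a rotationally invariant random vector `X`
with `X ≠ 0` a.s. and the relevant exponential moments, the tilted mean
`T(p) = E[X exp⟪p,X⟫]/E[exp⟪p,X⟫]` satisfies `T(p) = γ • p` for some `γ > 0`,
for every `p ≠ 0`. -/
theorem stmt_7 {d : ℕ} {Ω : Type*} [MeasurableSpace Ω]
    (μ : Measure Ω) [IsProbabilityMeasure μ]
    (X : Ω → EuclideanSpace ℝ (Fin d)) (hXm : AEMeasurable X μ)
    (hrot : ∀ R : EuclideanSpace ℝ (Fin d) ≃ₗᵢ[ℝ] EuclideanSpace ℝ (Fin d),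
      Measure.map (fun ω => R (X ω)) μ = Measure.map X μ)
    (hne : ∀ᵐ ω ∂μ, X ω ≠ 0)
    (p : EuclideanSpace ℝ (Fin d)) (hp : p ≠ 0)
    (hint1 : Integrable (fun ω => Real.exp ⟪p, X ω⟫) μ)
    (hint2 : Integrable (fun ω => ‖X ω‖ * Real.exp ⟪p, X ω⟫) μ) :
    ∃ γ : ℝ, 0 < γ ∧
      (∫ ω, Real.exp ⟪p, X ω⟫ ∂μ)⁻¹ • (∫ ω, Real.exp ⟪p, X ω⟫ • X ω ∂μ) = γ • p := by
  have hrotX : IsRotationInvariant X μ := hrot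
  have hint : Integrable (fun ω => exp ⟪p, X ω⟫ • X ω) μ := by
    refine (integrable_norm_iff ?_).mp ?_
    · fun_prop
    · simpa only [norm_smul, norm_of_nonneg (exp_pos _).le, mul_comm] using hint2
  obtain ⟨c, hc⟩ :=
    Submodule.mem_span_singleton.mp (hrotX.integral_exp_inner_smul_mem_span hXm p)
  have hc_pos : 0 < c := by
    have h := hrotX.inner_integral_exp_inner_smul_pos hXm hne hp hint
    rw [← hc, real_inner_smul_right, real_inner_self_eq_norm_sq] at h
    exact pos_of_mul_pos_left h (sq_nonneg _)
  exact ⟨(∫ ω, exp ⟪p, X ω⟫ ∂μ)⁻¹ * c, mul_pos (inv_pos.mpr (integral_exp_pos hint1)) hc_pos,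
    by rw [← hc, smul_smul]⟩
end
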